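/- arXiv:2002.06879 — 6 statements merged into one kernel-verified Lean document; each statement's English description precedes it below -/
import Mathlib

section
/- There exists a universal constant C > 0 such that for all integers n, k, j with k ≥ 1, n ≥ 5k, 0 ≤ 5j ≤ k, and every real ε with 1/k ≤ ε ≤ 1, setting k' = (1+ε)k, one has |φ_{j,0}(k') − φ_{j,0}(k)| ≤ C·ε·( j^{3/2}/(k·sqrt(n)) + sqrt(j)·k/n^{3/2} ), where φ_{j,0}(κ) = sqrt(j(κ−j+1)(n−κ−j+1)/((n−2j+2)(n−2j+1)κ)). -/
/-!
Write `φ_{j,0}(κ) = √(R κ)`. The radicand satisfies the exact identity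
`R(κ') - R(k) = ε j ((j-1)(n-j+1) - k κ') / ((n-2j+2)(n-2j+1) κ')` for `κ' = (1+ε)k`,
so `|R(κ') - R(k)| ≤ 4ε (j²/(nk) + jk/n²)`, while `R(k) ≥ j/(9n)`. Since
`|√a - √b| ≤ |a - b| / √b`, dividing by `√(j/(9n))` gives the bound with `C = 12`.
-/

/-- `φ_{j,0}(κ) = sqrt(j(κ−j+1)(n−κ−j+1)/((n−2j+2)(n−2j+1)κ))` -/
noncomputable def phi0 (n j : ℤ) (κ : ℝ) : ℝ :=
  Real.sqrt (((j : ℝ) * (κ - (j : ℝ) + 1) * ((n : ℝ) - κ - (j : ℝ) + 1)) /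
    (((n : ℝ) - 2 * (j : ℝ) + 2) * ((n : ℝ) - 2 * (j : ℝ) + 1) * κ))

/-- `φ_{j,1}(κ) = sqrt(κ/n)` -/
noncomputable def phi1 (n : ℤ) (κ : ℝ) : ℝ := Real.sqrt (κ / (n : ℝ))

/-- `φ_{j,2}(κ) = ((n−2κ)/sqrt(nκ))·sqrt(j(n−j+1)/((n−2j+2)(n−2j)))` -/
noncomputable def phi2 (n j : ℤ) (κ : ℝ) : ℝ :=
  (((n : ℝ) - 2 * κ) / Real.sqrt ((n : ℝ) * κ)) *
    Real.sqrt (((j : ℝ) * ((n : ℝ) - (j : ℝ) + 1)) /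
      (((n : ℝ) - 2 * (j : ℝ) + 2) * ((n : ℝ) - 2 * (j : ℝ))))

/-- `φ_{j,3}(κ) = sqrt((n−j+1)(κ−j)(n−κ−j)/((n−2j+1)(n−2j)κ))` -/
noncomputable def phi3 (n j : ℤ) (κ : ℝ) : ℝ :=
  Real.sqrt ((((n : ℝ) - (j : ℝ) + 1) * (κ - (j : ℝ)) * ((n : ℝ) - κ - (j : ℝ))) /
    (((n : ℝ) - 2 * (j : ℝ) + 1) * ((n : ℝ) - 2 * (j : ℝ)) * κ))

open Real

lemma abs_sqrt_sub_sqrt_le_of_sq_le {a b m : ℝ} (hm : 0 < m) (hmb : m ^ 2 ≤ b) :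
    |√a - √b| ≤ |a - b| / m := by
  have hb : 0 ≤ b := (sq_nonneg m).trans hmb
  have hm_le : m ≤ √b := Real.le_sqrt_of_sq_le hmb
  rw [le_div_iff₀ hm]
  rcases le_or_gt 0 a with ha | ha
  · have hprod : |√a - √b| * (√a + √b) = |a - b| := by
      rw [← abs_of_nonneg (by positivity : 0 ≤ √a + √b), ← abs_mul]
      congr 1
      linear_combination Real.mul_self_sqrt ha - Real.mul_self_sqrt hb
    rw [← hprod]
    exact mul_le_mul_of_nonneg_left (by linarith [Real.sqrt_nonneg a]) (abs_nonneg _)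
  · rw [Real.sqrt_eq_zero_of_nonpos ha.le, zero_sub, abs_neg, abs_of_nonneg (Real.sqrt_nonneg b),
      abs_sub_comm, abs_of_pos (by linarith)]
    calc √b * m ≤ √b * √b := mul_le_mul_of_nonneg_left hm_le (Real.sqrt_nonneg b)
      _ = b := Real.mul_self_sqrt hb
      _ ≤ b - a := by linarith

noncomputable def phi0Radicand (N J κ : ℝ) : ℝ :=
  J * (κ - J + 1) * (N - κ - J + 1) / ((N - 2 * J + 2) * (N - 2 * J + 1) * κ)

lemma phi0_eq_sqrt_phi0Radicand (n j : ℤ) (κ : ℝ) : phi0 n j κ = √(phi0Radicand n j κ) := rfl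

section

variable {N J K : ℝ}

lemma phi0Radicand_sub {κ κ' : ℝ} (hκ : κ ≠ 0) (hκ' : κ' ≠ 0) :
    phi0Radicand N J κ' - phi0Radicand N J κ =
      J * (κ' - κ) * ((J - 1) * (N - J + 1) - κ * κ') /
        ((N - 2 * J + 2) * (N - 2 * J + 1) * κ * κ') := by
  unfold phi0Radicand
  field_simp
  ring

lemma abs_phi0Radicand_sub_le {ε : ℝ} (hJ : 1 ≤ J) (hJK : 5 * J ≤ K) (hKN : 5 * K ≤ N)
    (hε₀ : 0 ≤ ε) (hε₁ : ε ≤ 1) :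
    |phi0Radicand N J ((1 + ε) * K) - phi0Radicand N J K| ≤
      4 * ε * (J ^ 2 / (N * K) + J * K / N ^ 2) := by
  have hK : 0 < K := by linarith
  have hN : 0 < N := by linarith
  set κ' := (1 + ε) * K
  have hκ'K : K ≤ κ' := by nlinarith
  have hκ'2K : κ' ≤ 2 * K := by nlinarith
  have hD : N ^ 2 / 2 ≤ (N - 2 * J + 2) * (N - 2 * J + 1) := by nlinarith
  have hnum : |(J - 1) * (N - J + 1) - K * κ'| ≤ J * N + 2 * K ^ 2 := by
    rw [abs_le]; constructor <;> nlinarith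
  have hden : N ^ 2 * K ^ 2 / 2 ≤ (N - 2 * J + 2) * (N - 2 * J + 1) * K * κ' := by
    have := mul_le_mul hD (mul_le_mul_of_nonneg_left hκ'K hK.le) (by positivity) (by nlinarith)
    nlinarith
  rw [phi0Radicand_sub hK.ne' (by positivity), show κ' - K = ε * K by ring]
  calc |J * (ε * K) * ((J - 1) * (N - J + 1) - K * κ') /
          ((N - 2 * J + 2) * (N - 2 * J + 1) * K * κ')|
      = J * (ε * K) * |(J - 1) * (N - J + 1) - K * κ'| /
          ((N - 2 * J + 2) * (N - 2 * J + 1) * K * κ') := by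
        rw [abs_div, abs_mul, abs_of_nonneg (by positivity : 0 ≤ J * (ε * K)),
          abs_of_pos (hden.trans_lt' (by positivity))]
    _ ≤ J * (ε * K) * (J * N + 2 * K ^ 2) / (N ^ 2 * K ^ 2 / 2) :=
        div_le_div₀ (by positivity) (mul_le_mul_of_nonneg_left hnum (by positivity))
          (by positivity) hden
    _ = 2 * ε * (J ^ 2 / (N * K)) + 4 * ε * (J * K / N ^ 2) := by
        field_simp
        ring
    _ ≤ 4 * ε * (J ^ 2 / (N * K) + J * K / N ^ 2) := by
        nlinarith [mul_nonneg hε₀ (by positivity : 0 ≤ J ^ 2 / (N * K))]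

lemma div_nine_le_phi0Radicand (hJ : 1 ≤ J) (hJK : 5 * J ≤ K) (hKN : 5 * K ≤ N) :
    J / (9 * N) ≤ phi0Radicand N J K := by
  have hK : 0 < K := by linarith
  have hN : 0 < N := by linarith
  have hD₁ : 0 < N - 2 * J + 2 := by linarith
  have hD₂ : 0 < N - 2 * J + 1 := by linarith
  have hD : (N - 2 * J + 2) * (N - 2 * J + 1) ≤ 2 * N ^ 2 := by nlinarith
  have hnum : 4 / 5 * K * (N / 2) ≤ (K - J + 1) * (N - K - J + 1) :=
    mul_le_mul (by linarith) (by linarith) (by positivity) (by linarith)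
  rw [phi0Radicand, div_le_div_iff₀ (by positivity) (by positivity)]
  nlinarith [mul_le_mul_of_nonneg_left hnum (by positivity : 0 ≤ 9 * N * J),
    mul_le_mul_of_nonneg_right hD (by positivity : 0 ≤ K * J), (by positivity : 0 ≤ N ^ 2 * K * J)]

end

/-- `|φ_{j,0}(k') − φ_{j,0}(k)| ≤ C·ε·( j^{3/2}/(k·sqrt(n)) + sqrt(j)·k/n^{3/2} )`
where `k' = (1+ε)k`. -/
theorem phi0_difference_bound :
    ∃ C : ℝ, 0 < C ∧ ∀ (n k j : ℤ) (ε : ℝ),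
      1 ≤ k → 5 * k ≤ n → 0 ≤ j → 5 * j ≤ k → 1 / (k : ℝ) ≤ ε → ε ≤ 1 →
      |phi0 n j ((1 + ε) * (k : ℝ)) - phi0 n j (k : ℝ)| ≤
        C * ε * ((j : ℝ) * Real.sqrt (j : ℝ) / ((k : ℝ) * Real.sqrt (n : ℝ))
          + Real.sqrt (j : ℝ) * (k : ℝ) / ((n : ℝ) * Real.sqrt (n : ℝ))) := by
  refine ⟨12, by norm_num, fun n k j ε hk hkn hj hjk hεk hε₁ => ?_⟩
  obtain rfl | hj := hj.eq_or_lt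
  · simp [phi0]
  have hJ : (1 : ℝ) ≤ j := by exact_mod_cast hj
  have hJK : 5 * (j : ℝ) ≤ k := by exact_mod_cast hjk
  have hKN : 5 * (k : ℝ) ≤ n := by exact_mod_cast hkn
  have hε₀ : 0 ≤ ε := le_trans (by positivity) hεk
  have hsqJ : 0 < √(j : ℝ) := by positivity
  have hN : (0 : ℝ) < n := by linarith
  have hsqN : 0 < √(n : ℝ) := by positivity
  have hm : (√(j : ℝ) / (3 * √(n : ℝ))) ^ 2 = j / (9 * n) := by
    rw [div_pow, mul_pow, Real.sq_sqrt (by positivity), Real.sq_sqrt hN.le]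
    norm_num
  rw [phi0_eq_sqrt_phi0Radicand, phi0_eq_sqrt_phi0Radicand]
  calc _ ≤ |phi0Radicand n j ((1 + ε) * k) - phi0Radicand n j k| / (√(j : ℝ) / (3 * √(n : ℝ))) :=
        abs_sqrt_sub_sqrt_le_of_sq_le (by positivity) (hm ▸ div_nine_le_phi0Radicand hJ hJK hKN)
    _ ≤ 4 * ε * ((j : ℝ) ^ 2 / (n * k) + j * k / n ^ 2) / (√(j : ℝ) / (3 * √(n : ℝ))) := by
        gcongr
        exact abs_phi0Radicand_sub_le hJ hJK hKN hε₀ hε₁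
    _ = _ := by
        field_simp
        rw [Real.sq_sqrt hN.le, Real.sq_sqrt (by positivity)]
        ring
end

section
/- There exists a universal constant C > 0 such that for all integers n, k, j with k ≥ 1, n ≥ 5k, 0 ≤ 5j ≤ k, and every real ε with 1/k ≤ ε ≤ 1, setting k' = (1+ε)k, one has |φ_{j,2}(k') − φ_{j,2}(k)| ≤ C·ε·sqrt(j/k), where φ_{j,2}(κ) = ((n−2κ)/sqrt(nκ))·sqrt(j(n−j+1)/((n−2j+2)(n−2j))). -/
/-!
Write `φ_{j,2}(κ) = P(κ) · W` with `P(κ) = (n − 2κ)/√(nκ) = √(n/κ) − 2√(κ/n)` and `W` independent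
of `κ`. With `s = √(1 + ε) ≤ 1 + ε/2`, `P((1 + ε)κ) − P(κ) = −(s − 1)(√(n/κ)/s + 2√(κ/n))`, whose size
is at most `ε√(n/κ)` because `2κ ≤ n`; and `W ≤ 2√(j/n)` once `5j ≤ n`. Multiplying, `C = 2` works.
-/

open Real

noncomputable def phi2Prefactor (n κ : ℝ) : ℝ := (n - 2 * κ) / √(n * κ)

noncomputable def phi2Weight (n j : ℝ) : ℝ :=
  √(j * (n - j + 1) / ((n - 2 * j + 2) * (n - 2 * j)))

lemma phi2_eq_prefactor_mul_weight (n j : ℤ) (κ : ℝ) :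
    phi2 n j κ = phi2Prefactor n κ * phi2Weight n j := rfl

lemma phi2Prefactor_eq {n κ : ℝ} (hn : 0 < n) (hκ : 0 < κ) :
    phi2Prefactor n κ = √(n / κ) - 2 * √(κ / n) := by
  rw [phi2Prefactor, sqrt_div hn.le, sqrt_div hκ.le, sqrt_mul hn.le]
  have hn' := sqrt_pos.2 hn
  have hκ' := sqrt_pos.2 hκ
  field_simp
  rw [sq_sqrt hn.le, sq_sqrt hκ.le]

lemma abs_phi2Prefactor_dilate_sub_le {n κ ε : ℝ} (hκ : 0 < κ) (hκn : 2 * κ ≤ n)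
    (hε : 0 ≤ ε) :
    |phi2Prefactor n ((1 + ε) * κ) - phi2Prefactor n κ| ≤ ε * √(n / κ) := by
  have hn : 0 < n := by linarith
  have hv_le_u : 2 * √(κ / n) ≤ √(n / κ) := by
    rw [sqrt_div hκ.le, sqrt_div hn.le, mul_div_assoc', div_le_div_iff₀ (sqrt_pos.2 hn) (sqrt_pos.2 hκ),
      mul_assoc, mul_self_sqrt hκ.le, mul_self_sqrt hn.le]
    exact hκn
  set s := √(1 + ε)
  set u := √(n / κ)
  set v := √(κ / n)
  have hs : 1 ≤ s := one_le_sqrt.2 (by linarith)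
  have hs' : s ≤ 1 + ε / 2 := sqrt_one_add_le (by linarith)
  have hu : 0 ≤ u := sqrt_nonneg _
  have hdilate : phi2Prefactor n ((1 + ε) * κ) = u / s - 2 * v * s := by
    rw [phi2Prefactor_eq hn (by positivity), mul_comm, ← div_div, mul_div_right_comm,
      sqrt_div' _ (by linarith : 0 ≤ 1 + ε), sqrt_mul' _ (by linarith : 0 ≤ 1 + ε), mul_assoc]
  have hs0 : 0 < s := by linarith
  rw [hdilate, phi2Prefactor_eq hn hκ,
    show u / s - 2 * v * s - (u - 2 * v) = -((s - 1) * (u / s + 2 * v)) by field_simp; ring,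
    abs_neg, abs_of_nonneg (by positivity)]
  have hus : u / s ≤ u := div_le_self hu hs
  nlinarith

lemma phi2Weight_le {n j : ℝ} (hn : 0 < n) (hj : 0 ≤ j) (hjn : 5 * j ≤ n) :
    phi2Weight n j ≤ 2 * √(j / n) := by
  have hden : 0 < (n - 2 * j + 2) * (n - 2 * j) := by nlinarith
  rw [phi2Weight, show 2 * √(j / n) = √(4 * j / n) by
    rw [mul_div_assoc, sqrt_mul (by norm_num), show (4 : ℝ) = 2 ^ 2 by norm_num, sqrt_sq (by norm_num)]]
  apply sqrt_le_sqrt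
  rw [div_le_div_iff₀ hden hn]
  nlinarith [mul_nonneg hn.le (by linarith : 0 ≤ n - 5 * j), mul_nonneg hj hj]

lemma abs_phi2_dilate_sub_le {n j : ℤ} {κ ε : ℝ} (hκ : 0 < κ) (hκn : 2 * κ ≤ n)
    (hj : (0 : ℝ) ≤ j) (hjn : 5 * (j : ℝ) ≤ n) (hε : 0 ≤ ε) :
    |phi2 n j ((1 + ε) * κ) - phi2 n j κ| ≤ 2 * ε * √(j / κ) := by
  have hn : (0 : ℝ) < n := by linarith
  rw [phi2_eq_prefactor_mul_weight, phi2_eq_prefactor_mul_weight, ← sub_mul, abs_mul,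
    (abs_of_nonneg (sqrt_nonneg _) : |phi2Weight n j| = _)]
  calc _ ≤ ε * √(n / κ) * (2 * √(j / n)) :=
        mul_le_mul (abs_phi2Prefactor_dilate_sub_le hκ hκn hε) (phi2Weight_le hn hj hjn)
          (sqrt_nonneg _) (by positivity)
    _ = 2 * ε * (√(n / κ) * √(j / n)) := by ring
    _ = 2 * ε * √(j / κ) := by
        rw [← sqrt_mul (div_nonneg hn.le hκ.le), div_mul_div_comm, mul_comm (n : ℝ),
          mul_div_mul_right _ _ hn.ne']

/-- `|φ_{j,2}(k') − φ_{j,2}(k)| ≤ C·ε·sqrt(j/k)` where `k' = (1+ε)k`. -/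
theorem phi2_difference_bound :
    ∃ C : ℝ, 0 < C ∧ ∀ (n k j : ℤ) (ε : ℝ),
      1 ≤ k → 5 * k ≤ n → 0 ≤ j → 5 * j ≤ k → 1 / (k : ℝ) ≤ ε → ε ≤ 1 →
      |phi2 n j ((1 + ε) * (k : ℝ)) - phi2 n j (k : ℝ)| ≤
        C * ε * Real.sqrt ((j : ℝ) / (k : ℝ)) := by
  refine ⟨2, two_pos, fun n k j ε hk hkn hj hjk hkε _ => ?_⟩
  have hk' : (1 : ℝ) ≤ k := by exact_mod_cast hk
  have hε : 0 ≤ ε := le_trans (by positivity) hkε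
  exact abs_phi2_dilate_sub_le (by linarith) (by exact_mod_cast (by linarith : 2 * k ≤ n))
    (by exact_mod_cast hj) (by exact_mod_cast (by linarith : 5 * j ≤ n)) hε
end

section
/- There exists a universal constant C > 0 such that for all integers n, k, j with k ≥ 1, n ≥ 5k, 0 ≤ 5j ≤ k, and every real ε with 1/k ≤ ε ≤ 1, setting k' = (1+ε)k, one has |φ_{j,3}(k') − φ_{j,3}(k)| ≤ C·ε·( j/k + k/n ), where φ_{j,3}(κ) = sqrt((n−j+1)(κ−j)(n−κ−j)/((n−2j+1)(n−2j)κ)). -/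
-- No sign condition on `a`: for `a < 0` the junk value `√a = 0` still satisfies the bound.
theorem abs_sqrt_sub_sqrt_le {a b : ℝ} (hb : 0 < b) : |√a - √b| ≤ |a - b| / √b := by
  have hsb : 0 < √b := Real.sqrt_pos.2 hb
  rw [le_div_iff₀ hsb]
  rcases le_total 0 a with ha | ha
  · have hsum : |√a - √b| * (√a + √b) = |a - b| := by
      rw [← abs_of_nonneg (by positivity : 0 ≤ √a + √b), ← abs_mul]
      congr 1
      linear_combination Real.sq_sqrt ha - Real.sq_sqrt hb.le
    nlinarith [abs_nonneg (√a - √b), Real.sqrt_nonneg a]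
  · rw [Real.sqrt_eq_zero'.2 ha, zero_sub, abs_neg, abs_of_pos hsb, abs_of_neg (by linarith),
      Real.mul_self_sqrt hb.le]
    linarith

noncomputable def phi3Coeff (N J : ℝ) : ℝ := (N - J + 1) / ((N - 2 * J + 1) * (N - 2 * J))

noncomputable def phi3Profile (N J κ : ℝ) : ℝ := N - κ - J * (N - J) / κ

theorem phi3_eq_sqrt_phi3Coeff_mul_phi3Profile (n j : ℤ) {κ : ℝ} (hκ : κ ≠ 0) :
    phi3 n j κ = √(phi3Coeff n j * phi3Profile n j κ) := by
  unfold phi3 phi3Coeff phi3Profile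
  congr 1
  field_simp
  ring

theorem phi3Profile_eq {N J κ : ℝ} (hκ : κ ≠ 0) :
    phi3Profile N J κ = (κ - J) * (N - κ - J) / κ := by
  unfold phi3Profile
  field_simp
  ring

theorem quarter_le_phi3Coeff_mul_phi3Profile {N J K : ℝ} (hJ : 0 ≤ J) (hJK : 2 * J ≤ K)
    (hKN : 2 * K ≤ N) (hK : 0 < K) : 1 / 4 ≤ phi3Coeff N J * phi3Profile N J K := by
  have hD : 0 < N - 2 * J := by linarith
  have hfactors : phi3Coeff N J * phi3Profile N J K =
      (N - J + 1) / (N - 2 * J + 1) * ((K - J) / K) * ((N - K - J) / (N - 2 * J)) := by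
    rw [phi3Coeff, phi3Profile_eq hK.ne']
    field_simp
  have h1 : 1 ≤ (N - J + 1) / (N - 2 * J + 1) := by rw [one_le_div₀ (by linarith)]; linarith
  have h2 : 1 / 2 ≤ (K - J) / K := by rw [le_div_iff₀ hK]; linarith
  have h3 : 1 / 2 ≤ (N - K - J) / (N - 2 * J) := by rw [le_div_iff₀ hD]; linarith
  rw [hfactors]
  calc (1 : ℝ) / 4 = 1 * (1 / 2) * (1 / 2) := by norm_num
    _ ≤ _ := by gcongr

theorem abs_phi3Profile_sub_le {N J K ε : ℝ} (hJ : 0 ≤ J) (hJN : J ≤ N) (hK : 0 < K)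
    (hε : 0 ≤ ε) :
    |phi3Profile N J ((1 + ε) * K) - phi3Profile N J K| ≤ ε * (K + J * N / K) := by
  have hdiff : phi3Profile N J ((1 + ε) * K) - phi3Profile N J K =
      -(ε * K) + J * (N - J) * (ε / ((1 + ε) * K)) := by
    unfold phi3Profile
    field_simp
    ring
  have hrecip : ε / ((1 + ε) * K) ≤ ε / K := by
    gcongr
    nlinarith
  rw [hdiff]
  calc _ ≤ |-(ε * K)| + |J * (N - J) * (ε / ((1 + ε) * K))| := abs_add_le _ _
    _ = ε * K + J * (N - J) * (ε / ((1 + ε) * K)) := by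
        rw [abs_neg, abs_of_nonneg (by positivity), abs_of_nonneg]
        have : 0 ≤ N - J := by linarith
        positivity
    _ ≤ ε * K + J * N * (ε / K) := by
        gcongr
        · exact mul_nonneg hJ (by linarith)
        · linarith
    _ = ε * (K + J * N / K) := by ring

theorem mul_phi3Coeff_le_two {N J : ℝ} (hJ : 0 ≤ J) (hJN : 8 * J ≤ N) (hN : 0 < N) :
    N * phi3Coeff N J ≤ 2 := by
  unfold phi3Coeff
  rw [mul_div_assoc', div_le_iff₀ (by nlinarith)]
  nlinarith

/-- `|φ_{j,3}(k') − φ_{j,3}(k)| ≤ C·ε·( j/k + k/n )` where `k' = (1+ε)k`. -/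
theorem phi3_difference_bound :
    ∃ C : ℝ, 0 < C ∧ ∀ (n k j : ℤ) (ε : ℝ),
      1 ≤ k → 5 * k ≤ n → 0 ≤ j → 5 * j ≤ k → 1 / (k : ℝ) ≤ ε → ε ≤ 1 →
      |phi3 n j ((1 + ε) * (k : ℝ)) - phi3 n j (k : ℝ)| ≤
        C * ε * ((j : ℝ) / (k : ℝ) + (k : ℝ) / (n : ℝ)) := by
  refine ⟨4, by norm_num, fun n k j ε hk hkn hj hjk hε _ => ?_⟩
  have hK : (1 : ℝ) ≤ k := by exact_mod_cast hk
  have hKN : 5 * (k : ℝ) ≤ n := by exact_mod_cast hkn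
  have hJ : (0 : ℝ) ≤ j := by exact_mod_cast hj
  have hJK : 5 * (j : ℝ) ≤ k := by exact_mod_cast hjk
  have hK0 : (0 : ℝ) < k := by linarith
  have hN0 : (0 : ℝ) < n := by linarith
  have hε0 : 0 ≤ ε := le_trans (by positivity) hε
  set c := phi3Coeff n j
  set g := phi3Profile n j
  have hc : 0 ≤ c := div_nonneg (by linarith) (by nlinarith)
  have hquarter : 1 / 4 ≤ c * g k :=
    quarter_le_phi3Coeff_mul_phi3Profile hJ (by linarith) (by linarith) hK0
  have hhalf : 1 / 2 ≤ √(c * g k) := Real.le_sqrt_of_sq_le (by linarith)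
  rw [phi3_eq_sqrt_phi3Coeff_mul_phi3Profile n j (by positivity),
    phi3_eq_sqrt_phi3Coeff_mul_phi3Profile n j hK0.ne']
  calc _ ≤ |c * g ((1 + ε) * k) - c * g k| / √(c * g k) := abs_sqrt_sub_sqrt_le (by linarith)
    _ ≤ 2 * c * |g ((1 + ε) * k) - g k| := by
        rw [div_le_iff₀ (by linarith), ← mul_sub, abs_mul, abs_of_nonneg hc]
        nlinarith [mul_nonneg hc (abs_nonneg (g ((1 + ε) * k) - g k))]
    _ ≤ 2 * c * (ε * (k + j * n / k)) := by
        gcongr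
        exact abs_phi3Profile_sub_le hJ (by linarith) hK0 hε0
    _ = 2 * ε * (n * c) * (j / k + k / n) := by
        field_simp
        ring
    _ ≤ 2 * ε * 2 * (j / k + k / n) := by
        gcongr
        exact mul_phi3Coeff_le_two hJ (by linarith) hN0
    _ = 4 * ε * (j / k + k / n) := by ring
end

section
/- There exists a universal constant C > 0 such that for all integers n, k, j with k ≥ 1, n ≥ 5k, 0 ≤ 5j ≤ k, and every real ε with 1/k ≤ ε ≤ 1, setting k' = (1+ε)k, the vectors φ_j = (φ_{j,0}(k), φ_{j,1}(k), φ_{j,2}(k), φ_{j,3}(k)) and φ'_j = (φ_{j,0}(k'), φ_{j,1}(k'), φ_{j,2}(k'), φ_{j,3}(k')) in ℝ⁴ satisfy ‖φ_j − φ'_j‖² ≤ C·ε²·( j/k + k/n ). -/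
/-- The vector `φ_j(κ) = (φ_{j,0}(κ), φ_{j,1}(κ), φ_{j,2}(κ), φ_{j,3}(κ)) ∈ ℝ⁴`. -/
noncomputable def phiVec (n j : ℤ) (κ : ℝ) : EuclideanSpace ℝ (Fin 4) :=
  (WithLp.equiv 2 (Fin 4 → ℝ)).symm ![phi0 n j κ, phi1 n κ, phi2 n j κ, phi3 n j κ]

/-!
Put `κ' = (1 + ε)κ`. The coordinates `φ_{j,0}` and `φ_{j,3}` are square roots of
`A (κ + c)(d - κ)/κ`, which changes by `-A ε κ (1 + cd/(κκ'))` between `κ` and `κ'`;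
`(√a - √b)² ≤ (a - b)²/b` turns this into a bound whose factors, in the regime `5j ≤ k ≤ n/5`,
are all comparable to monomials in `n`, `k`, `j`. The coordinates `φ_{j,1}` and `φ_{j,2}` are
built from `√κ` and `1/√κ`, whose relative change is at most `ε`, and the second factor of
`φ_{j,2}` has size `√(j/n)`.
-/

open Real

lemma sq_sqrt_sub_sqrt_le {a b : ℝ} (ha : 0 ≤ a) (hb : 0 < b) :
    (√a - √b) ^ 2 ≤ (a - b) ^ 2 / b := by
  have hab : a - b = (√a - √b) * (√a + √b) := by
    linear_combination -(sq_sqrt ha) + sq_sqrt hb.le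
  have hb_le : b ≤ (√a + √b) ^ 2 := by
    nlinarith [sq_sqrt hb.le, sqrt_nonneg a, sqrt_nonneg b]
  rw [le_div_iff₀ hb, hab, mul_pow]
  exact mul_le_mul_of_nonneg_left hb_le (sq_nonneg _)

lemma sq_sqrt_one_add_mul_sub_sqrt_le {a ε : ℝ} (ha : 0 ≤ a) (hε : 0 ≤ ε) :
    (√((1 + ε) * a) - √a) ^ 2 ≤ ε ^ 2 * a := by
  have h_one_le : 1 ≤ √(1 + ε) := one_le_sqrt.2 (by linarith)
  have h_le : √(1 + ε) ≤ 1 + ε := sqrt_le_self_iff.2 (Or.inr (by linarith))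
  rw [sqrt_mul (by linarith), ← sub_one_mul, mul_pow, sq_sqrt ha]
  gcongr
  linarith

lemma norm_sub_sq_fin_four (a₀ a₁ a₂ a₃ b₀ b₁ b₂ b₃ : ℝ) :
    ‖(WithLp.equiv 2 (Fin 4 → ℝ)).symm ![a₀, a₁, a₂, a₃] -
        (WithLp.equiv 2 (Fin 4 → ℝ)).symm ![b₀, b₁, b₂, b₃]‖ ^ 2 =
      (a₀ - b₀) ^ 2 + (a₁ - b₁) ^ 2 + (a₂ - b₂) ^ 2 + (a₃ - b₃) ^ 2 := by
  simp [EuclideanSpace.real_norm_sq_eq, Fin.sum_univ_four]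

lemma sq_sqrt_mul_quadratic_div_sub_le {A K c d ε B : ℝ} (hA : 0 ≤ A) (hK : 0 < K) (hε : 0 ≤ ε)
    (hKc : 0 < K + c) (hd : (1 + ε) * K < d) (hB : |c * d| ≤ B) :
    (√(A * ((K + c) * (d - K) / K)) -
        √(A * (((1 + ε) * K + c) * (d - (1 + ε) * K) / ((1 + ε) * K)))) ^ 2 ≤
      A * ε ^ 2 * (K ^ 2 + B) ^ 2 / (K * ((K + c) * (d - K))) := by
  rcases hA.eq_or_lt with rfl | hA
  · simp
  set K' := (1 + ε) * K with hK'
  have hKK' : K ≤ K' := by nlinarith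
  have hK'pos : 0 < K' := by linarith
  have hdK : 0 < d - K := by linarith
  have hr : 0 < A * ((K + c) * (d - K) / K) := by positivity
  have hr' : 0 ≤ A * ((K' + c) * (d - K') / K') :=
    mul_nonneg hA.le (div_nonneg (mul_nonneg (by linarith) (by linarith)) hK'pos.le)
  -- `(κ + c)(d - κ)/κ = d - c - κ + cd/κ`
  have h_diff : A * ((K' + c) * (d - K') / K') - A * ((K + c) * (d - K) / K) =
      -(A * ε * K * (1 + c * d / (K * K'))) := by
    rw [hK']; field_simp; ring
  have h_factor : (1 + c * d / (K * K')) ^ 2 ≤ ((K ^ 2 + B) / K ^ 2) ^ 2 := by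
    have h_quot : |c * d / (K * K')| ≤ B / K ^ 2 := by
      rw [abs_div, abs_of_pos (mul_pos hK hK'pos)]
      exact div_le_div₀ (le_trans (abs_nonneg _) hB) hB (by positivity) (by nlinarith)
    rw [add_div, div_self (by positivity)]
    apply sq_le_sq'
    · linarith [neg_abs_le (c * d / (K * K')), abs_nonneg (c * d / (K * K'))]
    · linarith [le_abs_self (c * d / (K * K'))]
  calc (√(A * ((K + c) * (d - K) / K)) - √(A * ((K' + c) * (d - K') / K'))) ^ 2
      = (√(A * ((K' + c) * (d - K') / K')) - √(A * ((K + c) * (d - K) / K))) ^ 2 := by ring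
    _ ≤ (A * ((K' + c) * (d - K') / K') - A * ((K + c) * (d - K) / K)) ^ 2 /
          (A * ((K + c) * (d - K) / K)) := sq_sqrt_sub_sqrt_le hr' hr
    _ = (A * ε * K) ^ 2 * (1 + c * d / (K * K')) ^ 2 / (A * ((K + c) * (d - K) / K)) := by
        rw [h_diff]; ring
    _ ≤ (A * ε * K) ^ 2 * ((K ^ 2 + B) / K ^ 2) ^ 2 / (A * ((K + c) * (d - K) / K)) := by
        gcongr
    _ = A * ε ^ 2 * (K ^ 2 + B) ^ 2 / (K * ((K + c) * (d - K))) := by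
        field_simp

lemma sq_sqrt_mul_quadratic_div_sub_le_of_bounds {N K J A c d ε : ℝ} (hK : 0 < K)
    (hKN : 5 * K ≤ N) (hJK : 5 * J ≤ K) (hε0 : 0 ≤ ε) (hε1 : ε ≤ 1) (hA : 0 ≤ A) (hAN : A * N ≤ 2)
    (hc : 4 / 5 * K ≤ K + c) (hd : N / 2 ≤ d - K) (hcd : |c * d| ≤ J * N) :
    (√(A * ((K + c) * (d - K) / K)) -
        √(A * (((1 + ε) * K + c) * (d - (1 + ε) * K) / ((1 + ε) * K)))) ^ 2 ≤
      2 * ε ^ 2 * (J / K + K / N) := by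
  have hN : 0 < N := by linarith
  have hJN : 0 ≤ J * N := le_trans (abs_nonneg _) hcd
  have h_prod : K ^ 2 + J * N ≤ (K + c) * (d - K) := by
    have : 4 / 5 * K * (N / 2) ≤ (K + c) * (d - K) :=
      mul_le_mul hc hd (by positivity) (by linarith)
    nlinarith
  have hA_le : A ≤ 2 / N := by rw [le_div_iff₀ hN]; exact hAN
  calc _ ≤ A * ε ^ 2 * (K ^ 2 + J * N) ^ 2 / (K * ((K + c) * (d - K))) :=
        sq_sqrt_mul_quadratic_div_sub_le hA hK hε0 (by linarith) (by nlinarith) hcd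
    _ ≤ A * ε ^ 2 * (K ^ 2 + J * N) ^ 2 / (K * (K ^ 2 + J * N)) := by gcongr
    _ = A * ε ^ 2 * (K ^ 2 + J * N) / K := by field_simp
    _ ≤ 2 / N * ε ^ 2 * (K ^ 2 + J * N) / K := by gcongr
    _ = 2 * ε ^ 2 * (J / K + K / N) := by field_simp; ring

lemma add_one_mul_le_two_mul_sub_two_mul_sq {N K J : ℝ} (hK : 1 ≤ K) (hKN : 5 * K ≤ N)
    (hJ : 0 ≤ J) (hJK : 5 * J ≤ K) : (N + 1) * N ≤ 2 * (N - 2 * J) ^ 2 := by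
  nlinarith

lemma sq_phi0_sub_le (n j : ℤ) {K ε : ℝ} (hK : 1 ≤ K) (hKN : 5 * K ≤ n) (hj : 0 ≤ j)
    (hJK : 5 * j ≤ K) (hε0 : 0 ≤ ε) (hε1 : ε ≤ 1) :
    (phi0 n j K - phi0 n j ((1 + ε) * K)) ^ 2 ≤ 2 * ε ^ 2 * (j / K + K / n) := by
  obtain rfl | hj1 : j = 0 ∨ 1 ≤ j := by omega
  · have : (0 : ℝ) < n := by linarith
    simpa [phi0] using by positivity
  have hJ1 : (1 : ℝ) ≤ j := by exact_mod_cast hj1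
  have h_key := add_one_mul_le_two_mul_sub_two_mul_sq hK hKN (by linarith) hJK
  have h_form : ∀ κ, phi0 n j κ = √(j / ((n - 2 * j + 2) * (n - 2 * j + 1)) *
      ((κ + (1 - j)) * ((n - j + 1) - κ) / κ)) := fun κ => by
    rw [phi0, div_mul_div_comm]; congr 2; ring
  rw [h_form, h_form]
  apply sq_sqrt_mul_quadratic_div_sub_le_of_bounds (by linarith) hKN hJK hε0 hε1
  · apply div_nonneg <;> nlinarith
  · rw [div_mul_eq_mul_div, div_le_iff₀ (by nlinarith)]; nlinarith
  · linarith
  · linarith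
  · rw [abs_le]; constructor <;> nlinarith

lemma sq_phi3_sub_le (n j : ℤ) {K ε : ℝ} (hK : 1 ≤ K) (hKN : 5 * K ≤ n) (hJ : (0 : ℝ) ≤ j)
    (hJK : 5 * j ≤ K) (hε0 : 0 ≤ ε) (hε1 : ε ≤ 1) :
    (phi3 n j K - phi3 n j ((1 + ε) * K)) ^ 2 ≤ 2 * ε ^ 2 * (j / K + K / n) := by
  have h_key := add_one_mul_le_two_mul_sub_two_mul_sq hK hKN hJ hJK
  have h_form : ∀ κ, phi3 n j κ = √((n - j + 1) / ((n - 2 * j + 1) * (n - 2 * j)) *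
      ((κ + -j) * ((n - j) - κ) / κ)) := fun κ => by
    rw [phi3, div_mul_div_comm]; congr 2; ring
  rw [h_form, h_form]
  apply sq_sqrt_mul_quadratic_div_sub_le_of_bounds (by linarith) hKN hJK hε0 hε1
  · apply div_nonneg <;> nlinarith
  · rw [div_mul_eq_mul_div, div_le_iff₀ (by nlinarith)]; nlinarith
  · linarith
  · linarith
  · rw [abs_le]; constructor <;> nlinarith

lemma sq_phi1_sub_le (n : ℤ) {K ε : ℝ} (hK : 0 ≤ K) (hn : (0 : ℝ) ≤ n) (hε : 0 ≤ ε) :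
    (phi1 n K - phi1 n ((1 + ε) * K)) ^ 2 ≤ ε ^ 2 * (K / n) := by
  rw [phi1, phi1, mul_div_assoc, ← neg_sub, neg_sq]
  exact sq_sqrt_one_add_mul_sub_sqrt_le (by positivity) hε

lemma sub_two_mul_div_sqrt_mul {N κ : ℝ} (hN : 0 < N) (hκ : 0 < κ) :
    (N - 2 * κ) / √(N * κ) = √(N / κ) - 2 * √(κ / N) := by
  have hsN : 0 < √N := sqrt_pos.2 hN
  have hsκ : 0 < √κ := sqrt_pos.2 hκ
  rw [sqrt_mul hN.le, sqrt_div hN.le, sqrt_div hκ.le]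
  field_simp
  linear_combination -(mul_self_sqrt hN.le) + 2 * mul_self_sqrt hκ.le

lemma sq_phi2_sub_le (n j : ℤ) {K ε : ℝ} (hK : 1 ≤ K) (hKN : 5 * K ≤ n) (hJ : (0 : ℝ) ≤ j)
    (hJK : 5 * j ≤ K) (hε : 0 ≤ ε) :
    (phi2 n j K - phi2 n j ((1 + ε) * K)) ^ 2 ≤ 20 * ε ^ 2 * (j / K) := by
  have hN : (0 : ℝ) < n := by linarith
  have hK0 : 0 < K := by linarith
  have hK' : 0 < (1 + ε) * K := by positivity
  have h_key := add_one_mul_le_two_mul_sub_two_mul_sq hK hKN hJ hJK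
  set S := √(j * (n - j + 1) / ((n - 2 * j + 2) * (n - 2 * j)))
  have hS : S ^ 2 ≤ 2 * j / n := by
    have h : ((n : ℝ) - j + 1) * n ≤ 2 * ((n - 2 * j + 2) * (n - 2 * j)) := by nlinarith
    rw [sq_sqrt (div_nonneg (by nlinarith) (by nlinarith)), div_le_div_iff₀ (by nlinarith) hN]
    nlinarith [mul_le_mul_of_nonneg_left h hJ]
  have hKN' : K / n ≤ n / K := by rw [div_le_div_iff₀ hN hK0]; nlinarith
  set x := √(n / K) - √(n / ((1 + ε) * K))
  set y := √(K / n) - √((1 + ε) * K / n)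
  have hx : x ^ 2 ≤ ε ^ 2 * (n / K) := by
    have h := sq_sqrt_one_add_mul_sub_sqrt_le (a := n / ((1 + ε) * K)) (by positivity) hε
    rw [show (1 + ε) * (n / ((1 + ε) * K)) = n / K by field_simp] at h
    calc x ^ 2 ≤ ε ^ 2 * (n / ((1 + ε) * K)) := h
      _ ≤ ε ^ 2 * (n / K) := by gcongr; nlinarith
  have hy : y ^ 2 ≤ ε ^ 2 * (n / K) := by
    have h := sq_phi1_sub_le n hK0.le hN.le hε
    rw [phi1, phi1] at h
    nlinarith
  have h_diff : phi2 n j K - phi2 n j ((1 + ε) * K) = (x - 2 * y) * S := by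
    rw [phi2, phi2, sub_two_mul_div_sqrt_mul hN hK0, sub_two_mul_div_sqrt_mul hN hK']
    ring
  calc (phi2 n j K - phi2 n j ((1 + ε) * K)) ^ 2 = (x - 2 * y) ^ 2 * S ^ 2 := by
        rw [h_diff, mul_pow]
    _ ≤ 10 * ε ^ 2 * (n / K) * (2 * j / n) :=
        mul_le_mul (by nlinarith [sq_nonneg (x + 2 * y)]) hS (sq_nonneg _) (by positivity)
    _ = 20 * ε ^ 2 * (j / K) := by field_simp; ring

/-- `‖φ_j − φ'_j‖² ≤ C·ε²·( j/k + k/n )` where `φ'_j` uses `k' = (1+ε)k`. -/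
theorem phiVec_difference_bound :
    ∃ C : ℝ, 0 < C ∧ ∀ (n k j : ℤ) (ε : ℝ),
      1 ≤ k → 5 * k ≤ n → 0 ≤ j → 5 * j ≤ k → 1 / (k : ℝ) ≤ ε → ε ≤ 1 →
      ‖phiVec n j (k : ℝ) - phiVec n j ((1 + ε) * (k : ℝ))‖ ^ 2 ≤
        C * ε ^ 2 * ((j : ℝ) / (k : ℝ) + (k : ℝ) / (n : ℝ)) := by
  refine ⟨24, by norm_num, fun n k j ε hk hkn hj hjk hεk hε1 => ?_⟩
  have hK : (1 : ℝ) ≤ k := by exact_mod_cast hk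
  have hKN : 5 * (k : ℝ) ≤ n := by exact_mod_cast hkn
  have hJ : (0 : ℝ) ≤ j := by exact_mod_cast hj
  have hJK : 5 * (j : ℝ) ≤ k := by exact_mod_cast hjk
  have hε0 : 0 ≤ ε := le_trans (by positivity) hεk
  have h0 := sq_phi0_sub_le n j hK hKN hj hJK hε0 hε1
  have h1 := sq_phi1_sub_le n (K := k) (by positivity) (by linarith) hε0
  have h2 := sq_phi2_sub_le n j hK hKN hJ hJK hε0
  have h3 := sq_phi3_sub_le n j hK hKN hJ hJK hε0 hε1
  have hA : 0 ≤ ε ^ 2 * (j / k) := by positivity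
  have hB : 0 ≤ ε ^ 2 * (k / n) := mul_nonneg (sq_nonneg ε) (div_nonneg (by linarith) (by linarith))
  rw [phiVec, phiVec, norm_sub_sq_fin_four]
  linarith
end

section
/- Let n, k, ℓ, t be integers with k ≥ 1, n ≥ 5k, ℓ ≥ 0, t ≥ 1, 2ℓ ≤ t, and 5t ≤ k, and let ε be real with 1/k ≤ ε ≤ 1; set k' = (1+ε)k. For 0 ≤ j ≤ k let γ_j^{(0)} = max(1 − j/t, 0), and define recursively for s ≥ 0 and 0 ≤ j ≤ k: γ_j^{(s+1)} = γ_{j−1}^{(s)}·φ_{j,0}(k)φ_{j,0}(k') + γ_j^{(s)}·(φ_{j,1}(k)φ_{j,1}(k') + φ_{j,2}(k)φ_{j,2}(k')) + γ_{j+1}^{(s)}·φ_{j,3}(k)φ_{j,3}(k'), with the conventions γ_{−1}^{(s)} = 0 and γ_{k+1}^{(s)} = 0. Let D = min over 0 ≤ j ≤ ℓ of the inner product ⟨φ_j, φ'_j⟩ = Σ_{i=0}^{3} φ_{j,i}(k)φ_{j,i}(k'). Then for every s with 0 ≤ s ≤ ℓ and every j with 0 ≤ j ≤ ℓ − s, one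 has γ_j^{(s)} ≥ D^s / 2. -/
/-- The inner product `⟨φ_j, φ'_j⟩ = Σ_{i=0}^{3} φ_{j,i}(k)·φ_{j,i}(κ')`. -/
noncomputable def phiInner (n k j : ℤ) (κ' : ℝ) : ℝ :=
  phi0 n j (k : ℝ) * phi0 n j κ' + phi1 n (k : ℝ) * phi1 n κ'
    + phi2 n j (k : ℝ) * phi2 n j κ' + phi3 n j (k : ℝ) * phi3 n j κ'

/-- The recursively defined coefficients `γ_j^{(s)}`:
`γ_j^{(0)} = max(1 − j/t, 0)` for `0 ≤ j ≤ k`, and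
`γ_j^{(s+1)} = γ_{j−1}^{(s)}·φ_{j,0}(k)φ_{j,0}(k') +
  γ_j^{(s)}·(φ_{j,1}(k)φ_{j,1}(k') + φ_{j,2}(k)φ_{j,2}(k')) +
  γ_{j+1}^{(s)}·φ_{j,3}(k)φ_{j,3}(k')`,
with the conventions `γ_{−1}^{(s)} = 0` and `γ_{k+1}^{(s)} = 0`
(encoded here by setting the value to `0` outside the range `0 ≤ j ≤ k`). -/
noncomputable def gammaSeq (n k t : ℤ) (κ' : ℝ) : ℕ → ℤ → ℝ
  | 0 => fun j => if 0 ≤ j ∧ j ≤ k then max (1 - (j : ℝ) / (t : ℝ)) 0 else 0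
  | s + 1 => fun j =>
      if 0 ≤ j ∧ j ≤ k then
        gammaSeq n k t κ' s (j - 1) * (phi0 n j (k : ℝ) * phi0 n j κ')
          + gammaSeq n k t κ' s j *
              (phi1 n (k : ℝ) * phi1 n κ' + phi2 n j (k : ℝ) * phi2 n j κ')
          + gammaSeq n k t κ' s (j + 1) * (phi3 n j (k : ℝ) * phi3 n j κ')
      else 0

/-!
Each step of the recurrence writes `γ_j^{(s+1)}` as a combination of `γ_{j-1}^{(s)}, γ_j^{(s)},
γ_{j+1}^{(s)}` with nonnegative weights summing to `⟨φ_j, φ'_j⟩ ≥ D`, so a lower bound `m` on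
`γ^{(s)}` over a window of indices becomes the lower bound `m·D` on `γ^{(s+1)}` over the window
shrunk by one. The window `0 ≤ j ≤ ℓ` starts with `γ_j^{(0)} = 1 - j/t ≥ 1/2` since `2ℓ ≤ t`.
The left neighbour of `j = 0` is harmless because its weight `φ_{0,0}` vanishes.
-/

theorem mul_pow_le_of_three_term_recurrence (g : ℕ → ℤ → ℝ) (a b c : ℤ → ℝ) (ℓ : ℤ) (m D : ℝ)
    (hm : 0 ≤ m) (hD : 0 ≤ D) (ha₀ : a 0 = 0)
    (ha : ∀ j, 0 ≤ j → j ≤ ℓ → 0 ≤ a j) (hb : ∀ j, 0 ≤ j → j ≤ ℓ → 0 ≤ b j)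
    (hc : ∀ j, 0 ≤ j → j ≤ ℓ → 0 ≤ c j) (hDle : ∀ j, 0 ≤ j → j ≤ ℓ → D ≤ a j + b j + c j)
    (hbase : ∀ j, 0 ≤ j → j ≤ ℓ → m ≤ g 0 j)
    (hstep : ∀ s j, 0 ≤ j → j ≤ ℓ →
      g (s + 1) j = g s (j - 1) * a j + g s j * b j + g s (j + 1) * c j)
    (s : ℕ) (j : ℤ) (hj₀ : 0 ≤ j) (hj : j + s ≤ ℓ) :
    m * D ^ s ≤ g s j := by
  induction s generalizing j with
  | zero => simpa using hbase j hj₀ (by simpa using hj)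
  | succ s ih =>
    push_cast at hj
    have hjℓ : j ≤ ℓ := by omega
    have hmD : 0 ≤ m * D ^ s := by positivity
    have hleft : m * D ^ s * a j ≤ g s (j - 1) * a j := by
      rcases hj₀.eq_or_lt with rfl | hpos
      · simp [ha₀]
      · exact mul_le_mul_of_nonneg_right (ih (j - 1) (by omega) (by omega)) (ha j hj₀ hjℓ)
    have hmid : m * D ^ s * b j ≤ g s j * b j :=
      mul_le_mul_of_nonneg_right (ih j hj₀ (by omega)) (hb j hj₀ hjℓ)
    have hright : m * D ^ s * c j ≤ g s (j + 1) * c j :=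
      mul_le_mul_of_nonneg_right (ih (j + 1) (by omega) (by omega)) (hc j hj₀ hjℓ)
    calc m * D ^ (s + 1) = m * D ^ s * D := by ring
      _ ≤ m * D ^ s * (a j + b j + c j) := mul_le_mul_of_nonneg_left (hDle j hj₀ hjℓ) hmD
      _ ≤ g (s + 1) j := by rw [hstep s j hj₀ hjℓ]; linarith

@[simp]
theorem phi0_zero_left (n : ℤ) (κ : ℝ) : phi0 n 0 κ = 0 := by
  simp [phi0]

theorem phi2_nonneg {n : ℤ} {κ : ℝ} (hκ : 2 * κ ≤ n) (j : ℤ) : 0 ≤ phi2 n j κ :=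
  mul_nonneg (div_nonneg (by linarith) (Real.sqrt_nonneg _)) (Real.sqrt_nonneg _)

theorem phi0_mul_phi0_nonneg (n j : ℤ) (κ κ' : ℝ) : 0 ≤ phi0 n j κ * phi0 n j κ' :=
  mul_nonneg (Real.sqrt_nonneg _) (Real.sqrt_nonneg _)

theorem phi3_mul_phi3_nonneg (n j : ℤ) (κ κ' : ℝ) : 0 ≤ phi3 n j κ * phi3 n j κ' :=
  mul_nonneg (Real.sqrt_nonneg _) (Real.sqrt_nonneg _)

theorem phi12_mul_nonneg {n : ℤ} {κ κ' : ℝ} (hκ : 2 * κ ≤ n) (hκ' : 2 * κ' ≤ n) (j : ℤ) :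
    0 ≤ phi1 n κ * phi1 n κ' + phi2 n j κ * phi2 n j κ' :=
  add_nonneg (mul_nonneg (Real.sqrt_nonneg _) (Real.sqrt_nonneg _))
    (mul_nonneg (phi2_nonneg hκ j) (phi2_nonneg hκ' j))

theorem phiInner_eq (n k j : ℤ) (κ' : ℝ) :
    phiInner n k j κ' = phi0 n j k * phi0 n j κ'
      + (phi1 n k * phi1 n κ' + phi2 n j k * phi2 n j κ') + phi3 n j k * phi3 n j κ' := by
  rw [phiInner, add_assoc (phi0 n j k * phi0 n j κ')]

theorem phiInner_nonneg {n k : ℤ} {κ' : ℝ} (hk : 2 * (k : ℝ) ≤ n) (hκ' : 2 * κ' ≤ n) (j : ℤ) :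
    0 ≤ phiInner n k j κ' := by
  rw [phiInner_eq]
  have := phi0_mul_phi0_nonneg n j k κ'
  have := phi12_mul_nonneg hk hκ' j
  have := phi3_mul_phi3_nonneg n j k κ'
  linarith

theorem gammaSeq_succ_of_le {n k t : ℤ} {κ' : ℝ} (s : ℕ) {j : ℤ} (hj₀ : 0 ≤ j) (hjk : j ≤ k) :
    gammaSeq n k t κ' (s + 1) j =
      gammaSeq n k t κ' s (j - 1) * (phi0 n j k * phi0 n j κ')
        + gammaSeq n k t κ' s j * (phi1 n k * phi1 n κ' + phi2 n j k * phi2 n j κ')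
        + gammaSeq n k t κ' s (j + 1) * (phi3 n j k * phi3 n j κ') := by
  simp [gammaSeq, hj₀, hjk]

theorem one_half_le_gammaSeq_zero {n k t : ℤ} {κ' : ℝ} (ht : 0 < t) {j : ℤ} (hj₀ : 0 ≤ j)
    (hjk : j ≤ k) (hjt : 2 * j ≤ t) : 1 / 2 ≤ gammaSeq n k t κ' 0 j := by
  have htR : (0 : ℝ) < t := by exact_mod_cast ht
  have hjtR : 2 * (j : ℝ) ≤ t := by exact_mod_cast hjt
  have : (j : ℝ) / t ≤ 1 / 2 := by rw [div_le_div_iff₀ htR two_pos]; linarith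
  simp only [gammaSeq, hj₀, hjk, and_self, if_true]
  exact le_max_of_le_left (by linarith)

theorem gammaSeq_lower_bound_general (n k ℓ t : ℤ) (ε : ℝ)
    (hk : 1 ≤ k) (hn : 5 * k ≤ n) (ht : 1 ≤ t)
    (hℓt : 2 * ℓ ≤ t) (htk : 5 * t ≤ k)
    (hε₂ : ε ≤ 1)
    (D : ℝ)
    (hD : IsLeast ((fun j : ℤ => phiInner n k j ((1 + ε) * (k : ℝ))) ''
      {j : ℤ | 0 ≤ j ∧ j ≤ ℓ}) D)
    (s : ℕ) (j : ℤ) (hj₀ : 0 ≤ j) (hj : j ≤ ℓ - (s : ℤ)) :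
    D ^ s / 2 ≤ gammaSeq n k t ((1 + ε) * (k : ℝ)) s j := by
  set κ' : ℝ := (1 + ε) * k
  have hkR : (1 : ℝ) ≤ k := by exact_mod_cast hk
  have hnR : 5 * (k : ℝ) ≤ n := by exact_mod_cast hn
  have hkn : 2 * (k : ℝ) ≤ n := by linarith
  have hκ'n : 2 * κ' ≤ n := by nlinarith
  have hD₀ : 0 ≤ D := by
    obtain ⟨i, -, rfl⟩ := hD.1
    exact phiInner_nonneg hkn hκ'n i
  rw [← one_div_mul_eq_div]
  refine mul_pow_le_of_three_term_recurrence _ _ _ _ ℓ _ D (by norm_num) hD₀ (by simp)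
    (fun i _ _ => phi0_mul_phi0_nonneg n i k κ') (fun i _ _ => phi12_mul_nonneg hkn hκ'n i)
    (fun i _ _ => phi3_mul_phi3_nonneg n i k κ')
    (fun i hi₀ hiℓ => phiInner_eq n k i κ' ▸ hD.2 ⟨i, ⟨hi₀, hiℓ⟩, rfl⟩)
    (fun i hi₀ hiℓ => one_half_le_gammaSeq_zero (by omega) hi₀ (by omega) (by omega))
    (fun s i hi₀ hiℓ => gammaSeq_succ_of_le s hi₀ (by omega)) s j hj₀ (by omega)

/-- If `D` is the minimum of `⟨φ_j, φ'_j⟩` over `0 ≤ j ≤ ℓ`, then for all `0 ≤ s ≤ ℓ` and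
`0 ≤ j ≤ ℓ − s` we have `γ_j^{(s)} ≥ D^s / 2`. -/
theorem gammaSeq_lower_bound (n k ℓ t : ℤ) (ε : ℝ)
    (hk : 1 ≤ k) (hn : 5 * k ≤ n) (hℓ : 0 ≤ ℓ) (ht : 1 ≤ t)
    (hℓt : 2 * ℓ ≤ t) (htk : 5 * t ≤ k)
    (hε₁ : 1 / (k : ℝ) ≤ ε) (hε₂ : ε ≤ 1)
    (D : ℝ)
    (hD : IsLeast ((fun j : ℤ => phiInner n k j ((1 + ε) * (k : ℝ))) ''
      {j : ℤ | 0 ≤ j ∧ j ≤ ℓ}) D)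
    (s : ℕ) (hs : (s : ℤ) ≤ ℓ) (j : ℤ) (hj₀ : 0 ≤ j) (hj : j ≤ ℓ - (s : ℤ)) :
    D ^ s / 2 ≤ gammaSeq n k t ((1 + ε) * (k : ℝ)) s j :=
  gammaSeq_lower_bound_general n k ℓ t ε hk hn ht hℓt htk hε₂ D hD s j hj₀ hj
end

section
/- There exists a universal constant C > 0 such that for all integers n, k, t, j with k ≥ 1, n ≥ 5k, t ≥ 1, 5t ≤ k, 0 ≤ j ≤ k, and every real ε with 1/k ≤ ε ≤ 1 and k' = (1+ε)k, the following holds. Set γ_i = max(1 − i/t, 0) for 0 ≤ i ≤ k and γ_{k+1} = 0. Then both | sqrt((k−j)(n−k'−j))·γ_j/(n−2j) − sqrt((k'−j)(n−k−j))·γ_{j+1}/(n−2j) | ≤ C·(1/t + ε)·sqrt(k/n) and | sqrt((k'−j)(n−k−j))·γ_j/(n−2j) − sqrt((k−j)(n−k'−j))·γ_{j+1}/(n−2j) | ≤ C·(1/t + ε)·sqrt(k/n). -/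
/-!
Write `a = √((k−j)(n−k'−j))`, `b = √((k'−j)(n−k−j))`, `D = n − 2j` and `s = √(k/n)`, so that
`k = s²n`. Each expression is `(x γ_j − y γ_{j+1}) / D` with `{x, y} = {a, b}`, and splits as
`(x − y) γ_j / D + y (γ_j − γ_{j+1}) / D`. Since `γ` is `1/t`-Lipschitz in the index and
`a, b ≤ √(2kn) ≤ 3 D s`, the second part is at most `3 s / t`. For the first part, `γ_j ≠ 0` forces
`j < t ≤ k/5`, so `a ≥ √(kn)/2 = n s/2`; together with the identity `a² − b² = −ε k D` this gives
`|a − b| ≤ ε k D / a ≤ 2 ε D s`. Hence `C = 3` works.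
-/

/-- The coefficients `γ_i = max(1 − i/t, 0)` for `0 ≤ i ≤ k`, with `γ_{k+1} = 0`
(encoded by value `0` outside `0 ≤ i ≤ k`). -/
noncomputable def gammaCoeff (k t : ℤ) (i : ℤ) : ℝ :=
  if 0 ≤ i ∧ i ≤ k then max (1 - (i : ℝ) / (t : ℝ)) 0 else 0

section Gamma

variable {k t : ℤ}

lemma gammaCoeff_of_mem {i : ℤ} (hi₀ : 0 ≤ i) (hik : i ≤ k) :
    gammaCoeff k t i = max (1 - (i : ℝ) / t) 0 :=
  if_pos ⟨hi₀, hik⟩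

lemma gammaCoeff_nonneg (i : ℤ) : 0 ≤ gammaCoeff k t i := by
  unfold gammaCoeff
  split_ifs
  exacts [le_max_right _ _, le_rfl]

lemma gammaCoeff_le_one (ht : 0 ≤ t) (i : ℤ) : gammaCoeff k t i ≤ 1 := by
  unfold gammaCoeff
  split_ifs with hi
  · have : 0 ≤ (i : ℝ) / t := div_nonneg (by exact_mod_cast hi.1) (by exact_mod_cast ht)
    exact max_le (by linarith) zero_le_one
  · exact zero_le_one

lemma gammaCoeff_eq_zero_of_le {i : ℤ} (ht : 0 < t) (hti : t ≤ i) : gammaCoeff k t i = 0 := by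
  unfold gammaCoeff
  split_ifs
  · refine max_eq_right (sub_nonpos.mpr ?_)
    rw [le_div_iff₀ (by exact_mod_cast ht), one_mul]
    exact_mod_cast hti
  · rfl

lemma lt_of_gammaCoeff_pos {i : ℤ} (ht : 0 < t) (hγ : 0 < gammaCoeff k t i) : i < t := by
  by_contra! hti
  exact hγ.ne' (gammaCoeff_eq_zero_of_le ht hti)

lemma abs_gammaCoeff_sub_gammaCoeff_succ_le {i : ℤ} (ht : 0 < t) (htk : t ≤ k) (hi : 0 ≤ i) :
    |gammaCoeff k t i - gammaCoeff k t (i + 1)| ≤ 1 / t := by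
  by_cases hik : i + 1 ≤ k
  · rw [gammaCoeff_of_mem hi (by omega), gammaCoeff_of_mem (by omega) hik]
    calc _ ≤ |(1 - (i : ℝ) / t) - (1 - ((i + 1 : ℤ) : ℝ) / t)| := abs_max_sub_max_le_abs _ _ _
      _ = 1 / t := by
        rw [show (1 - (i : ℝ) / t) - (1 - ((i + 1 : ℤ) : ℝ) / t) = 1 / t by push_cast; ring]
        exact abs_of_pos (one_div_pos.2 (by exact_mod_cast ht))
  · rw [gammaCoeff_eq_zero_of_le ht (by omega), gammaCoeff_eq_zero_of_le ht (by omega),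
      sub_zero, abs_zero]
    positivity

end Gamma

section Estimates

variable {x y p q K N J D ε s : ℝ}

lemma abs_sqrt_sub_sqrt_mul_sqrt_le (hx : 0 ≤ x) (hy : 0 ≤ y) :
    |√x - √y| * √x ≤ |x - y| := by
  have hxy : x - y = (√x - √y) * (√x + √y) := by
    ring_nf
    rw [Real.sq_sqrt hx, Real.sq_sqrt hy]
  rw [hxy, abs_mul, abs_of_nonneg (by positivity : 0 ≤ √x + √y)]
  gcongr
  exact le_add_of_nonneg_right (Real.sqrt_nonneg y)

lemma sqrt_mul_le_three_mul (hp₀ : 0 ≤ p) (hp : p ≤ 2 * (s ^ 2 * N)) (hq₀ : 0 ≤ q) (hq : q ≤ N)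
    (hD : 3 * N ≤ 5 * D) (hs : 0 ≤ s) : √(p * q) ≤ 3 * s * D := by
  have hD₀ : 0 ≤ D := by linarith
  rw [Real.sqrt_le_left (mul_nonneg (by linarith) hD₀)]
  calc p * q ≤ 2 * (s ^ 2 * N) * N := mul_le_mul hp hq hq₀ (hp₀.trans hp)
    _ ≤ (3 * s * D) ^ 2 := by nlinarith [sq_nonneg s, mul_le_mul hD hD (by linarith) (by linarith)]

lemma half_mul_le_sqrt_mul (hp : s ^ 2 * N ≤ 2 * p) (hq : N ≤ 2 * q) (hN : 0 ≤ N) :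
    N * s / 2 ≤ √(p * q) := by
  apply Real.le_sqrt_of_sq_le
  have hp₀ : 0 ≤ p := by nlinarith [sq_nonneg s]
  nlinarith [mul_le_mul hp hq hN (by linarith)]

lemma abs_sqrt_mul_sub_sqrt_mul_le (hK : K = s ^ 2 * N) (hs : 0 < s) (hN₀ : 0 < N)
    (hN : 5 * K ≤ N) (hJ₀ : 0 ≤ J) (hJ : 5 * J ≤ K) (hε₀ : 0 ≤ ε) (hε₁ : ε ≤ 1) :
    |√((K - J) * (N - (1 + ε) * K - J)) - √(((1 + ε) * K - J) * (N - K - J))|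
      ≤ 2 * ε * s * (N - 2 * J) := by
  have hlow : N * s / 2 ≤ √((K - J) * (N - (1 + ε) * K - J)) :=
    half_mul_le_sqrt_mul (by nlinarith) (by nlinarith) hN₀.le
  have hpos : 0 < N * s / 2 := by positivity
  have hK₀ : 0 < K := by rw [hK]; positivity
  have hdiff := abs_sqrt_sub_sqrt_mul_sqrt_le
    (x := (K - J) * (N - (1 + ε) * K - J)) (y := ((1 + ε) * K - J) * (N - K - J))
    (mul_nonneg (by linarith) (by nlinarith)) (mul_nonneg (by nlinarith) (by linarith))
  rw [show (K - J) * (N - (1 + ε) * K - J) - ((1 + ε) * K - J) * (N - K - J)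
      = -(ε * K * (N - 2 * J)) by ring, abs_neg,
    abs_of_nonneg (mul_nonneg (mul_nonneg hε₀ hK₀.le) (by linarith))] at hdiff
  rw [← mul_le_mul_iff_of_pos_right hpos]
  calc _ ≤ _ * √((K - J) * (N - (1 + ε) * K - J)) := mul_le_mul_of_nonneg_left hlow (abs_nonneg _)
    _ ≤ ε * K * (N - 2 * J) := hdiff
    _ = 2 * ε * s * (N - 2 * J) * (N * s / 2) := by rw [hK]; ring

lemma abs_mul_div_sub_mul_div_le {γ γ' e M τ : ℝ} (hD : 0 < D) (hγ : 0 ≤ γ) (hy : 0 ≤ y)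
    (hxy : |x - y| * γ ≤ e * D) (hyM : y ≤ M * D) (hγγ' : |γ - γ'| ≤ τ) :
    |x * γ / D - y * γ' / D| ≤ e + M * τ := by
  rw [← sub_div, abs_div, abs_of_pos hD, div_le_iff₀ hD]
  calc |x * γ - y * γ'| = |(x - y) * γ + y * (γ - γ')| := by ring_nf
    _ ≤ |x - y| * γ + y * |γ - γ'| := by
      grw [abs_add_le, abs_mul, abs_mul, abs_of_nonneg hγ, abs_of_nonneg hy]
    _ ≤ e * D + M * D * τ := by gcongr; linarith
    _ = (e + M * τ) * D := by ring

end Estimates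

/-- Both
`|sqrt((k−j)(n−k'−j))·γ_j/(n−2j) − sqrt((k'−j)(n−k−j))·γ_{j+1}/(n−2j)|` and
`|sqrt((k'−j)(n−k−j))·γ_j/(n−2j) − sqrt((k−j)(n−k'−j))·γ_{j+1}/(n−2j)|`
are at most `C·(1/t + ε)·sqrt(k/n)`, where `k' = (1+ε)k`. -/
theorem membership_oracle_bound :
    ∃ C : ℝ, 0 < C ∧ ∀ (n k t j : ℤ) (ε : ℝ),
      1 ≤ k → 5 * k ≤ n → 1 ≤ t → 5 * t ≤ k → 0 ≤ j → j ≤ k →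
      1 / (k : ℝ) ≤ ε → ε ≤ 1 →
      |Real.sqrt (((k : ℝ) - (j : ℝ)) * ((n : ℝ) - (1 + ε) * (k : ℝ) - (j : ℝ)))
            * gammaCoeff k t j / ((n : ℝ) - 2 * (j : ℝ))
          - Real.sqrt (((1 + ε) * (k : ℝ) - (j : ℝ)) * ((n : ℝ) - (k : ℝ) - (j : ℝ)))
            * gammaCoeff k t (j + 1) / ((n : ℝ) - 2 * (j : ℝ))| ≤
          C * (1 / (t : ℝ) + ε) * Real.sqrt ((k : ℝ) / (n : ℝ)) ∧
      |Real.sqrt (((1 + ε) * (k : ℝ) - (j : ℝ)) * ((n : ℝ) - (k : ℝ) - (j : ℝ)))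
            * gammaCoeff k t j / ((n : ℝ) - 2 * (j : ℝ))
          - Real.sqrt (((k : ℝ) - (j : ℝ)) * ((n : ℝ) - (1 + ε) * (k : ℝ) - (j : ℝ)))
            * gammaCoeff k t (j + 1) / ((n : ℝ) - 2 * (j : ℝ))| ≤
          C * (1 / (t : ℝ) + ε) * Real.sqrt ((k : ℝ) / (n : ℝ)) := by
  refine ⟨3, by norm_num, fun n k t j ε hk hn ht htk hj₀ hjk hεk hε₁ => ?_⟩
  obtain ⟨hk', hn', htk', hj₀', hjk'⟩ : (1 : ℝ) ≤ k ∧ 5 * (k : ℝ) ≤ n ∧ 5 * (t : ℝ) ≤ k ∧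
      (0 : ℝ) ≤ j ∧ (j : ℝ) ≤ k := by
    refine ⟨?_, ?_, ?_, ?_, ?_⟩ <;> assumption_mod_cast
  have hε₀ : 0 ≤ ε := (by positivity : (0 : ℝ) ≤ 1 / k).trans hεk
  have hεk₀ : 0 ≤ ε * k := by positivity
  have hεk₁ : ε * k ≤ k := by nlinarith
  have hn₀ : (0 : ℝ) < n := by linarith
  set s := √((k : ℝ) / n)
  have hs : 0 < s := Real.sqrt_pos.2 (by positivity)
  have hks : (k : ℝ) = s ^ 2 * n := by
    rw [Real.sq_sqrt (by positivity), div_mul_cancel₀ _ hn₀.ne']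
  have hD₀ : (0 : ℝ) < n - 2 * j := by linarith
  have hD : 3 * (n : ℝ) ≤ 5 * (n - 2 * j) := by linarith
  set a := √(((k : ℝ) - j) * (n - (1 + ε) * k - j))
  set b := √(((1 + ε) * (k : ℝ) - j) * (n - k - j))
  have ha : a ≤ 3 * s * (n - 2 * j) :=
    sqrt_mul_le_three_mul (by linarith) (by rw [← hks]; linarith) (by linarith) (by linarith)
      hD hs.le
  have hb : b ≤ 3 * s * (n - 2 * j) :=
    sqrt_mul_le_three_mul (by linarith) (by rw [← hks]; linarith) (by linarith) (by linarith)
      hD hs.le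
  have hab : |a - b| * gammaCoeff k t j ≤ 2 * ε * s * (n - 2 * j) := by
    rcases (gammaCoeff_nonneg j).eq_or_lt with hγ | hγ
    · rw [← hγ, mul_zero]
      exact mul_nonneg (by positivity) hD₀.le
    · have hjt : (j : ℝ) < t := by exact_mod_cast lt_of_gammaCoeff_pos (by omega) hγ
      calc _ ≤ |a - b| := mul_le_of_le_one_right (abs_nonneg _) (gammaCoeff_le_one (by omega) j)
        _ ≤ _ := abs_sqrt_mul_sub_sqrt_mul_le hks hs hn₀ hn' hj₀' (by linarith) hε₀ hε₁
  have hγ : |gammaCoeff k t j - gammaCoeff k t (j + 1)| ≤ 1 / t :=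
    abs_gammaCoeff_sub_gammaCoeff_succ_le (by omega) (by omega) hj₀
  have hC : 2 * ε * s + 3 * s * (1 / t) ≤ 3 * (1 / t + ε) * s := by nlinarith [mul_nonneg hε₀ hs.le]
  exact ⟨(abs_mul_div_sub_mul_div_le hD₀ (gammaCoeff_nonneg j) (Real.sqrt_nonneg _)
      hab hb hγ).trans hC,
    (abs_mul_div_sub_mul_div_le hD₀ (gammaCoeff_nonneg j) (Real.sqrt_nonneg _)
      (abs_sub_comm a b ▸ hab) ha hγ).trans hC⟩
end
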